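/- Let G be a finite simple graph, R a commutative ring, and p, q ∈ R. Then Σ_{S ⊆ E(G)} (−1)^{|S|} (1 + p)^{|S|} (1 + q)^{c(S)} = Σ_{i, j ≥ 0} p^i q^j · χ^{i,j}(G), where χ^{i,j}(G) := Σ_{S ⊆ E(G)} (−1)^{|S|} · C(|S|, i) · C(c(S), j) is the Euler characteristic of the (i,j)-graded part of the dichromatic chain complex of G, computed at chain level (C(m, r) denotes the binomial coefficient). That is, the dichromatic polynomial Z_G(p, q) in the variables λ = 1 + q, v = −(1 + p) is the bigraded Euler characteristic Σ_{i,j} p^i q^j χ(H^{*,i,j}(G)). -/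
import Mathlib


/-- The number of connected components of the spanning subgraph `(V, S)`. -/
noncomputable def comps (V : Type) [Fintype V] (S : Finset (Sym2 V)) : ℕ :=
  Nat.card (SimpleGraph.fromEdgeSet (↑S : Set (Sym2 V))).ConnectedComponent


lemma one_add_pow_eq {R : Type} [CommRing R] (p : R) (m N : ℕ) (h : m ≤ N) :
    (1 + p) ^ m = ∑ i ∈ Finset.range (N + 1), p ^ i * (m.choose i : R) := by
  rw [add_comm, add_pow]
  simp only [one_pow, mul_one]
  refine Finset.sum_subset (Finset.range_subset_range.2 (by omega)) fun i _ hi => ?_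
  simp only [Finset.mem_range, not_lt] at hi
  rw [Nat.choose_eq_zero_of_lt (by omega)]
  simp

lemma comps_le (V : Type) [Fintype V] (S : Finset (Sym2 V)) :
    comps V S ≤ Fintype.card V := by
  rw [comps, ← Nat.card_eq_fintype_card]
  exact Nat.card_le_card_of_surjective _ Quot.mk_surjective

/-- The dichromatic polynomial `Z_G(p, q)` (in variables `λ = 1 + q`, `v = −(1 + p)`)
is the bigraded Euler characteristic of the dichromatic chain complex:
`Σ_{S ⊆ E(G)} (−1)^{|S|} (1+p)^{|S|} (1+q)^{c(S)} = Σ_{i,j} p^i q^j χ^{i,j}(G)`,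
where `χ^{i,j}(G) = Σ_{S ⊆ E(G)} (−1)^{|S|} C(|S|, i) C(c(S), j)`.
(All terms with `i > |E(G)|` or `j > |V|` vanish, so those ranges suffice.) -/
theorem dichromatic_bigraded_euler_char (V : Type) [Fintype V] [DecidableEq V]
    (G : SimpleGraph V) [DecidableRel G.Adj] (R : Type) [CommRing R] (p q : R) :
    ∑ S ∈ G.edgeFinset.powerset,
        (-1) ^ S.card * (1 + p) ^ S.card * (1 + q) ^ comps V S =
      ∑ i ∈ Finset.range (G.edgeFinset.card + 1),
        ∑ j ∈ Finset.range (Fintype.card V + 1),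
          p ^ i * q ^ j *
            ∑ S ∈ G.edgeFinset.powerset,
              (-1) ^ S.card * (S.card.choose i : R) * ((comps V S).choose j : R) := by
  have key : ∀ S ∈ G.edgeFinset.powerset,
      (-1:R) ^ S.card * (1 + p) ^ S.card * (1 + q) ^ comps V S =
      ∑ i ∈ Finset.range (G.edgeFinset.card + 1),
        ∑ j ∈ Finset.range (Fintype.card V + 1),
          p ^ i * q ^ j *
            ((-1) ^ S.card * (S.card.choose i : R) * ((comps V S).choose j : R)) := by
    intro S hS
    rw [Finset.mem_powerset] at hS
    rw [one_add_pow_eq p S.card G.edgeFinset.card (Finset.card_le_card hS),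
        one_add_pow_eq q (comps V S) (Fintype.card V) (comps_le V S)]
    simp only [Finset.mul_sum, Finset.sum_mul]
    rw [Finset.sum_comm]
    exact Finset.sum_congr rfl fun i _ => Finset.sum_congr rfl fun j _ => by ring
  rw [Finset.sum_congr rfl key, Finset.sum_comm]
  refine Finset.sum_congr rfl fun i _ => ?_
  rw [Finset.sum_comm]
  refine Finset.sum_congr rfl fun j _ => ?_
  rw [Finset.mul_sum]
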